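/- arXiv:1402.3191 — 7 statements merged into one kernel-verified Lean document; each statement's English description precedes it below -/
import Mathlib

section
/- Let G be a group, A an abelian group with pseudonorm ν, ψ: G → A a quasihomomorphism with defect D, and S ⊆ G a subset such that ν(ψ(s)) ≤ C₀ for every s ∈ S ∪ S⁻¹. If k ≥ 1 and g ∈ G can be written as a product g = (β₁s₁β₁⁻¹)(β₂s₂β₂⁻¹)⋯(β_k s_k β_k⁻¹) with each sᵢ ∈ S ∪ S⁻¹ and βᵢ ∈ G, then ν(ψ(g)) ≤ k·(C₀ + ν(ψ(1_G)) + 4D). In particular, if ψ is bounded on a set normally generating G then ψ is Lipschitz with respect to the biinvariant word norm associated to S. -/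
/-!
Up to an error of `D` per multiplication, `ψ` is additive, so `ψ (β s β⁻¹)` is close to
`ψ β + ψ s + ψ β⁻¹`, and `ψ β + ψ β⁻¹` is within `D` of `ψ 1`. Hence every conjugate of an element
of `S ∪ S⁻¹` has `ν ∘ ψ` at most `C₀ + ν (ψ 1) + 3D`, and a product of `k` such conjugates costs
at most `D` more per factor.
-/

section Quasihom

variable {G : Type*} [Group G] {A : Type*} [AddCommGroup A]

def IsQuasihom (ν : A → ℝ) (ψ : G → A) (D : ℝ) : Prop :=
  ∀ g h : G, ν (ψ g - ψ (g * h) + ψ h) ≤ D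

lemma pseudonorm_sub_le {ν : A → ℝ} (hν_neg : ∀ a, ν (-a) = ν a)
    (hν_add : ∀ a b, ν (a + b) ≤ ν a + ν b) (a b : A) : ν (a - b) ≤ ν a + ν b := by
  simpa only [sub_eq_add_neg, hν_neg] using hν_add a (-b)

namespace IsQuasihom

variable {ν : A → ℝ} {ψ : G → A} {D : ℝ}

lemma map_mul_le (hψ : IsQuasihom ν ψ D) (hν_neg : ∀ a, ν (-a) = ν a)
    (hν_add : ∀ a b, ν (a + b) ≤ ν a + ν b) (x y : G) :
    ν (ψ (x * y)) ≤ ν (ψ x) + ν (ψ y) + D := by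
  have h := pseudonorm_sub_le hν_neg hν_add (ψ x + ψ y) (ψ x - ψ (x * y) + ψ y)
  rw [show ψ x + ψ y - (ψ x - ψ (x * y) + ψ y) = ψ (x * y) by abel] at h
  linarith [hν_add (ψ x) (ψ y), hψ x y]

lemma map_conj_le (hψ : IsQuasihom ν ψ D) (hν_neg : ∀ a, ν (-a) = ν a)
    (hν_add : ∀ a b, ν (a + b) ≤ ν a + ν b) (b x : G) :
    ν (ψ (b * x * b⁻¹)) ≤ ν (ψ x) + ν (ψ 1) + 3 * D := by
  set e₁ := ψ b - ψ (b * (x * b⁻¹)) + ψ (x * b⁻¹)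
  set e₂ := ψ x - ψ (x * b⁻¹) + ψ b⁻¹
  set e₃ := ψ b - ψ (b * b⁻¹) + ψ b⁻¹
  have decomp : ψ (b * x * b⁻¹) = ψ x + ψ 1 + e₃ - e₁ - e₂ := by
    simp only [e₁, e₂, e₃, mul_inv_cancel, ← mul_assoc]
    abel
  have hsub := pseudonorm_sub_le hν_neg hν_add
  rw [decomp]
  linarith [hsub (ψ x + ψ 1 + e₃ - e₁) e₂, hsub (ψ x + ψ 1 + e₃) e₁, hν_add (ψ x + ψ 1) e₃,
    hν_add (ψ x) (ψ 1), hψ b (x * b⁻¹), hψ x b⁻¹, hψ b b⁻¹]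

lemma map_list_prod_le (hψ : IsQuasihom ν ψ D) (hν_neg : ∀ a, ν (-a) = ν a)
    (hν_add : ∀ a b, ν (a + b) ≤ ν a + ν b) {M : ℝ} (x : G) (L : List G)
    (hM : ∀ y ∈ x :: L, ν (ψ y) ≤ M) :
    ν (ψ (x :: L).prod) ≤ (L.length + 1) * M + L.length * D := by
  induction L generalizing x with
  | nil => simpa using hM x List.mem_cons_self
  | cons y L ih =>
    have htail := ih y fun z hz ↦ hM z (List.mem_cons_of_mem x hz)
    have hmul := hψ.map_mul_le hν_neg hν_add x (y :: L).prod
    rw [List.prod_cons]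
    push_cast [List.length_cons]
    linarith [hM x List.mem_cons_self]

end IsQuasihom

end Quasihom

theorem quasihom_bounded_on_normal_generators_lipschitz_general
    {G : Type*} [Group G] {A : Type*} [AddCommGroup A]
    (ν : A → ℝ)
    (hν_neg : ∀ a, ν (-a) = ν a)
    (hν_add : ∀ a b, ν (a + b) ≤ ν a + ν b)
    (ψ : G → A) (D : ℝ) (hD : 0 ≤ D)
    (hψ : ∀ g h : G, ν (ψ g - ψ (g * h) + ψ h) ≤ D)
    (S : Set G) (C₀ : ℝ)
    (hS : ∀ s ∈ S ∪ S⁻¹, ν (ψ s) ≤ C₀) :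
    ∀ (k : ℕ), 1 ≤ k → ∀ (s β : Fin k → G),
      (∀ i, s i ∈ S ∪ S⁻¹) →
      ∀ g : G, g = (List.ofFn (fun i => β i * s i * (β i)⁻¹)).prod →
      ν (ψ g) ≤ k * (C₀ + ν (ψ 1) + 4 * D) := by
  rintro k hk s β hs g rfl
  obtain ⟨n, rfl⟩ := Nat.exists_eq_add_of_le' hk
  have hconj : ∀ y ∈ List.ofFn (fun i => β i * s i * (β i)⁻¹),
      ν (ψ y) ≤ C₀ + ν (ψ 1) + 3 * D := by
    simp only [List.mem_ofFn, forall_exists_index]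
    rintro _ i rfl
    linarith [IsQuasihom.map_conj_le hψ hν_neg hν_add (β i) (s i), hS (s i) (hs i)]
  rw [List.ofFn_succ] at hconj ⊢
  have hprod := IsQuasihom.map_list_prod_le hψ hν_neg hν_add _ _ hconj
  rw [List.length_ofFn] at hprod
  push_cast
  nlinarith [hD]

theorem quasihom_bounded_on_normal_generators_lipschitz
    {G : Type*} [Group G] {A : Type*} [AddCommGroup A]
    (ν : A → ℝ)
    (hν_nonneg : ∀ a, 0 ≤ ν a)
    (hν_neg : ∀ a, ν (-a) = ν a)
    (hν_add : ∀ a b, ν (a + b) ≤ ν a + ν b)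
    (ψ : G → A) (D : ℝ) (hD : 0 ≤ D)
    (hψ : ∀ g h : G, ν (ψ g - ψ (g * h) + ψ h) ≤ D)
    (S : Set G) (C₀ : ℝ)
    (hS : ∀ s ∈ S ∪ S⁻¹, ν (ψ s) ≤ C₀) :
    ∀ (k : ℕ), 1 ≤ k → ∀ (s β : Fin k → G),
      (∀ i, s i ∈ S ∪ S⁻¹) →
      ∀ g : G, g = (List.ofFn (fun i => β i * s i * (β i)⁻¹)).prod →
      ν (ψ g) ≤ k * (C₀ + ν (ψ 1) + 4 * D) :=
  quasihom_bounded_on_normal_generators_lipschitz_general ν hν_neg hν_add ψ D hD hψ S C₀ hS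
end

section
/- Let G be a group, A an abelian group with pseudonorm ν, and ψ: G → A a quasihomomorphism with defect D. If k ≥ 1 and g ∈ G is a product of k commutators, g = ⁅a₁,b₁⁆⋯⁅a_k,b_k⁆ with aᵢ,bᵢ ∈ G, then ν(ψ(g)) ≤ k·(2ν(ψ(1_G)) + 6D). In other words, the restriction of ψ to the commutator subgroup [G,G] is Lipschitz with respect to the commutator length, with Lipschitz constant at most 2ν(ψ(1_G)) + 6D. -/
/-!
Since ψ is additive up to D, a commutator satisfies
ψ⁅x, y⁆ ≈ ψ(xy) + ψ(x⁻¹y⁻¹) ≈ (ψx + ψx⁻¹) + (ψy + ψy⁻¹) ≈ ψ1 + ψ1,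
with errors D, 2D and 2D, so ν(ψ⁅x, y⁆) ≤ 2ν(ψ1) + 5D. Splitting a product of k commutators
costs a further D at each of the k - 1 multiplications.
-/

open scoped commutatorElement

section Subadditive

variable {A : Type*} [AddCommGroup A] {ν : A → ℝ}

theorem le_add_apply_sub_of_subadditive (hν_add : ∀ a b, ν (a + b) ≤ ν a + ν b) (a b : A) :
    ν a ≤ ν b + ν (a - b) := by
  simpa using hν_add b (a - b)

theorem apply_add_le_add_apply_sub_of_subadditive (hν_add : ∀ a b, ν (a + b) ≤ ν a + ν b)
    (a b c d : A) : ν (a + b) ≤ ν (c + d) + ν (a - c) + ν (b - d) := by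
  have h := le_add_apply_sub_of_subadditive hν_add (a + b) (c + d)
  have hsplit := hν_add (a - c) (b - d)
  rw [show a + b - (c + d) = (a - c) + (b - d) by abel] at h
  linarith

end Subadditive

section Quasihom

variable {G : Type*} [Group G] {A : Type*} [AddCommGroup A] {ν : A → ℝ} {ψ : G → A} {D : ℝ}

theorem quasihom_add_sub_le (hψ : ∀ g h : G, ν (ψ g - ψ (g * h) + ψ h) ≤ D) (g h : G) :
    ν (ψ g + ψ h - ψ (g * h)) ≤ D := by
  rw [show ψ g + ψ h - ψ (g * h) = ψ g - ψ (g * h) + ψ h by abel]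
  exact hψ g h

theorem quasihom_sub_add_le (hν_neg : ∀ a, ν (-a) = ν a)
    (hψ : ∀ g h : G, ν (ψ g - ψ (g * h) + ψ h) ≤ D) (g h : G) :
    ν (ψ (g * h) - (ψ g + ψ h)) ≤ D := by
  rw [← hν_neg, neg_sub]
  exact quasihom_add_sub_le hψ g h

theorem quasihom_apply_mul_le (hν_neg : ∀ a, ν (-a) = ν a)
    (hν_add : ∀ a b, ν (a + b) ≤ ν a + ν b)
    (hψ : ∀ g h : G, ν (ψ g - ψ (g * h) + ψ h) ≤ D) (g h : G) :
    ν (ψ (g * h)) ≤ ν (ψ g + ψ h) + D := by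
  linarith [le_add_apply_sub_of_subadditive hν_add (ψ (g * h)) (ψ g + ψ h),
    quasihom_sub_add_le hν_neg hψ g h]

theorem quasihom_apply_commutatorElement_le (hν_neg : ∀ a, ν (-a) = ν a)
    (hν_add : ∀ a b, ν (a + b) ≤ ν a + ν b)
    (hψ : ∀ g h : G, ν (ψ g - ψ (g * h) + ψ h) ≤ D) (x y : G) :
    ν (ψ ⁅x, y⁆) ≤ 2 * ν (ψ 1) + 5 * D := by
  have hcomm : ⁅x, y⁆ = x * y * (x⁻¹ * y⁻¹) := by rw [commutatorElement_def, mul_assoc]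
  have hrearrange : ψ x + ψ y + (ψ x⁻¹ + ψ y⁻¹) = ψ x + ψ x⁻¹ + (ψ y + ψ y⁻¹) := by abel
  have hx := quasihom_add_sub_le hψ x x⁻¹
  have hy := quasihom_add_sub_le hψ y y⁻¹
  rw [mul_inv_cancel] at hx hy
  calc ν (ψ ⁅x, y⁆)
      ≤ ν (ψ (x * y) + ψ (x⁻¹ * y⁻¹)) + D := by
        rw [hcomm]; exact quasihom_apply_mul_le hν_neg hν_add hψ _ _
    _ ≤ ν (ψ x + ψ x⁻¹ + (ψ y + ψ y⁻¹)) + 3 * D := by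
        rw [← hrearrange]
        linarith [apply_add_le_add_apply_sub_of_subadditive hν_add (ψ (x * y)) (ψ (x⁻¹ * y⁻¹))
          (ψ x + ψ y) (ψ x⁻¹ + ψ y⁻¹), quasihom_sub_add_le hν_neg hψ x y,
          quasihom_sub_add_le hν_neg hψ x⁻¹ y⁻¹]
    _ ≤ ν (ψ 1 + ψ 1) + 5 * D := by
        linarith [apply_add_le_add_apply_sub_of_subadditive hν_add
          (ψ x + ψ x⁻¹) (ψ y + ψ y⁻¹) (ψ 1) (ψ 1)]
    _ ≤ 2 * ν (ψ 1) + 5 * D := by linarith [hν_add (ψ 1) (ψ 1)]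

theorem quasihom_apply_list_prod_add_le (hν_neg : ∀ a, ν (-a) = ν a)
    (hν_add : ∀ a b, ν (a + b) ≤ ν a + ν b)
    (hψ : ∀ g h : G, ν (ψ g - ψ (g * h) + ψ h) ≤ D) (x : G) (l : List G) :
    ν (ψ (x :: l).prod) + D ≤ ((x :: l).map fun y => ν (ψ y) + D).sum := by
  induction l generalizing x with
  | nil => simp
  | cons y l ih =>
    rw [List.prod_cons, List.map_cons, List.sum_cons]
    linarith [quasihom_apply_mul_le hν_neg hν_add hψ x (y :: l).prod,
      hν_add (ψ x) (ψ (y :: l).prod), ih y]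

end Quasihom

theorem quasihom_lipschitz_commutator_length_general
    {G : Type*} [Group G] {A : Type*} [AddCommGroup A]
    (ν : A → ℝ)
    (hν_neg : ∀ a, ν (-a) = ν a)
    (hν_add : ∀ a b, ν (a + b) ≤ ν a + ν b)
    (ψ : G → A) (D : ℝ) (hD : 0 ≤ D)
    (hψ : ∀ g h : G, ν (ψ g - ψ (g * h) + ψ h) ≤ D) :
    ∀ (k : ℕ), 1 ≤ k → ∀ (a b : Fin k → G),
      ∀ g : G, g = (List.ofFn (fun i => ⁅a i, b i⁆)).prod →
      ν (ψ g) ≤ k * (2 * ν (ψ 1) + 6 * D) := by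
  intro k hk a b g hg
  obtain ⟨x, l, hxl⟩ := List.exists_cons_of_ne_nil (l := List.ofFn fun i => ⁅a i, b i⁆)
    (by simp only [ne_eq, List.ofFn_eq_nil_iff]; omega)
  have hsum : ((List.ofFn fun i => ⁅a i, b i⁆).map fun y => ν (ψ y) + D).sum ≤
      k * (2 * ν (ψ 1) + 6 * D) := by
    refine (List.sum_le_card_nsmul _ (2 * ν (ψ 1) + 6 * D) ?_).trans_eq (by simp [mul_add])
    simp only [List.map_ofFn, List.mem_ofFn, Function.comp_apply, forall_exists_index]
    rintro _ i rfl
    linarith [quasihom_apply_commutatorElement_le hν_neg hν_add hψ (a i) (b i)]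
  rw [hxl] at hsum
  rw [hg, hxl]
  linarith [quasihom_apply_list_prod_add_le hν_neg hν_add hψ x l]

theorem quasihom_lipschitz_commutator_length
    {G : Type*} [Group G] {A : Type*} [AddCommGroup A]
    (ν : A → ℝ)
    (hν_nonneg : ∀ a, 0 ≤ ν a)
    (hν_neg : ∀ a, ν (-a) = ν a)
    (hν_add : ∀ a b, ν (a + b) ≤ ν a + ν b)
    (ψ : G → A) (D : ℝ) (hD : 0 ≤ D)
    (hψ : ∀ g h : G, ν (ψ g - ψ (g * h) + ψ h) ≤ D) :
    ∀ (k : ℕ), 1 ≤ k → ∀ (a b : Fin k → G),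
      ∀ g : G, g = (List.ofFn (fun i => ⁅a i, b i⁆)).prod →
      ν (ψ g) ≤ k * (2 * ν (ψ 1) + 6 * D) :=
  quasihom_lipschitz_commutator_length_general ν hν_neg hν_add ψ D hD hψ
end

section
/- Let G be a group equipped with a conjugation-invariant pseudonorm ν, and let α, Δ ∈ G. If α commutes with its conjugate ΔαΔ⁻¹, then for every natural number n one has ν(⁅α,Δ⁆ⁿ) ≤ 2ν(Δ); that is, the cyclic subgroup generated by ⁅α,Δ⁆ is bounded with respect to ν. -/
open scoped commutatorElement

theorem commutatorElement_eq_mul_inv_conj {G : Type*} [Group G] (a b : G) :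
    ⁅a, b⁆ = a * (b * a * b⁻¹)⁻¹ := by
  rw [commutatorElement_def]
  group

theorem commutatorElement_pow_of_commute_conj {G : Type*} [Group G] {a b : G}
    (h : Commute a (b * a * b⁻¹)) (n : ℕ) : ⁅a, b⁆ ^ n = ⁅a ^ n, b⁆ := by
  rw [commutatorElement_eq_mul_inv_conj, h.inv_right.mul_pow, inv_pow, conj_pow,
    ← commutatorElement_eq_mul_inv_conj]

theorem apply_commutatorElement_le_two_mul {G : Type*} [Group G] (ν : G → ℝ)
    (hν_inv : ∀ g, ν g⁻¹ = ν g) (hν_mul : ∀ g h, ν (g * h) ≤ ν g + ν h)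
    (hν_conj : ∀ g h, ν (h * g * h⁻¹) = ν g) (a b : G) : ν ⁅a, b⁆ ≤ 2 * ν b :=
  calc ν ⁅a, b⁆ = ν (a * b * a⁻¹ * b⁻¹) := by rw [commutatorElement_def]
    _ ≤ ν (a * b * a⁻¹) + ν b⁻¹ := hν_mul _ _
    _ = 2 * ν b := by rw [hν_conj, hν_inv, two_mul]

theorem bounded_cyclic_of_commuting_conjugate_general
    {G : Type*} [Group G]
    (ν : G → ℝ)
    (hν_inv : ∀ g, ν g⁻¹ = ν g)
    (hν_mul : ∀ g h, ν (g * h) ≤ ν g + ν h)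
    (hν_conj : ∀ g h, ν (h * g * h⁻¹) = ν g)
    (α Δ : G)
    (hcomm : Commute α (Δ * α * Δ⁻¹)) :
    ∀ n : ℕ, ν (⁅α, Δ⁆ ^ n) ≤ 2 * ν Δ := by
  intro n
  rw [commutatorElement_pow_of_commute_conj hcomm]
  exact apply_commutatorElement_le_two_mul ν hν_inv hν_mul hν_conj _ _

theorem bounded_cyclic_of_commuting_conjugate
    {G : Type*} [Group G]
    (ν : G → ℝ)
    (hν_nonneg : ∀ g, 0 ≤ ν g)
    (hν_inv : ∀ g, ν g⁻¹ = ν g)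
    (hν_mul : ∀ g h, ν (g * h) ≤ ν g + ν h)
    (hν_conj : ∀ g h, ν (h * g * h⁻¹) = ν g)
    (α Δ : G)
    (hcomm : Commute α (Δ * α * Δ⁻¹)) :
    ∀ n : ℕ, ν (⁅α, Δ⁆ ^ n) ≤ 2 * ν Δ :=
  bounded_cyclic_of_commuting_conjugate_general ν hν_inv hν_mul hν_conj α Δ hcomm
end

section
/- Let G be a group equipped with a conjugation-invariant pseudonorm ν, and let α, Δ ∈ G. If α is conjugate to its inverse via Δ, i.e. ΔαΔ⁻¹ = α⁻¹, then for every integer n one has ν(αⁿ) ≤ 2ν(Δ) + ν(α); that is, α generates a bounded cyclic subgroup. -/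
/-!
Since `Δ` conjugates `α` to `α⁻¹`, it conjugates `α ^ (-k)` to `α ^ k`, so the even power
`α ^ (2 * k)` is the commutator `⁅α ^ k, Δ⁆`. A commutator `⁅g, h⁆ = (g * h * g⁻¹) * h⁻¹` is
a conjugate of `h` times `h⁻¹`, hence has pseudonorm at most `2 * ν h`. Odd powers cost one
more factor `α`.
-/

open scoped commutatorElement

section ConjInvariantPseudonorm

variable {G : Type*} [Group G]

lemma nonneg_of_mul_le_of_inv (ν : G → ℝ) (hν_inv : ∀ g, ν g⁻¹ = ν g)
    (hν_mul : ∀ g h, ν (g * h) ≤ ν g + ν h) (g : G) : 0 ≤ ν g := by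
  have h_one : ν 1 ≤ ν 1 + ν 1 := by simpa using hν_mul 1 1
  have h_g : ν 1 ≤ ν g + ν g := by simpa [hν_inv] using hν_mul g g⁻¹
  linarith

lemma commutatorElement_le_two_mul (ν : G → ℝ) (hν_inv : ∀ g, ν g⁻¹ = ν g)
    (hν_mul : ∀ g h, ν (g * h) ≤ ν g + ν h) (hν_conj : ∀ g h, ν (h * g * h⁻¹) = ν g)
    (g h : G) : ν ⁅g, h⁆ ≤ 2 * ν h := by
  calc ν ⁅g, h⁆ = ν (g * h * g⁻¹ * h⁻¹) := by rw [commutatorElement_def]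
    _ ≤ ν (g * h * g⁻¹) + ν h⁻¹ := hν_mul _ _
    _ = 2 * ν h := by rw [hν_conj, hν_inv, two_mul]

lemma commutatorElement_zpow_of_conj_eq_inv {α Δ : G}
    (hconj : Δ * α * Δ⁻¹ = α⁻¹) (k : ℤ) : ⁅α ^ k, Δ⁆ = α ^ (2 * k) := by
  have h_conj_zpow : Δ * α ^ (-k) * Δ⁻¹ = α ^ k := by
    rw [← conj_zpow, hconj, inv_zpow', neg_neg]
  calc ⁅α ^ k, Δ⁆ = α ^ k * (Δ * α ^ (-k) * Δ⁻¹) := by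
        rw [commutatorElement_def, zpow_neg]; group
    _ = α ^ (2 * k) := by rw [h_conj_zpow, two_mul, zpow_add]

end ConjInvariantPseudonorm

theorem bounded_cyclic_of_conjugate_to_inverse_general
    {G : Type*} [Group G]
    (ν : G → ℝ)
    (hν_inv : ∀ g, ν g⁻¹ = ν g)
    (hν_mul : ∀ g h, ν (g * h) ≤ ν g + ν h)
    (hν_conj : ∀ g h, ν (h * g * h⁻¹) = ν g)
    (α Δ : G)
    (hconj : Δ * α * Δ⁻¹ = α⁻¹) :
    ∀ n : ℤ, ν (α ^ n) ≤ 2 * ν Δ + ν α := by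
  have h_even (k : ℤ) : ν (α ^ (2 * k)) ≤ 2 * ν Δ := by
    rw [← commutatorElement_zpow_of_conj_eq_inv hconj]
    exact commutatorElement_le_two_mul ν hν_inv hν_mul hν_conj _ _
  intro n
  obtain ⟨k, rfl | rfl⟩ := Int.even_or_odd' n
  · linarith [h_even k, nonneg_of_mul_le_of_inv ν hν_inv hν_mul α]
  · calc ν (α ^ (2 * k + 1)) ≤ ν (α ^ (2 * k)) + ν α := by
          rw [zpow_add_one]; exact hν_mul _ _
      _ ≤ 2 * ν Δ + ν α := by linarith [h_even k]

theorem bounded_cyclic_of_conjugate_to_inverse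
    {G : Type*} [Group G]
    (ν : G → ℝ)
    (hν_nonneg : ∀ g, 0 ≤ ν g)
    (hν_inv : ∀ g, ν g⁻¹ = ν g)
    (hν_mul : ∀ g h, ν (g * h) ≤ ν g + ν h)
    (hν_conj : ∀ g h, ν (h * g * h⁻¹) = ν g)
    (α Δ : G)
    (hconj : Δ * α * Δ⁻¹ = α⁻¹) :
    ∀ n : ℤ, ν (α ^ n) ≤ 2 * ν Δ + ν α :=
  bounded_cyclic_of_conjugate_to_inverse_general ν hν_inv hν_mul hν_conj α Δ hconj
end

section
/- Let G be a group, A an abelian group with pseudonorm ν, and ψ: G → A a quasihomomorphism with defect D such that ν(ψ(1_G)) = 0. Let α ∈ [G,G] be an element of the commutator subgroup, let cl(α^k) denote the commutator length of α^k in G, and set scl(α) := limsup_{k→∞} cl(α^k)/k. Then sν(ψ(α)) ≤ 6D·scl(α) + D, where sν(a) := lim_{k→∞} ν(k·a)/k is the stabilization of ν. In particular, if scl(α) = 0 then sν(ψ(α)) ≤ D. -/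
open Filter
open scoped commutatorElement

/-- The commutator length: the minimal number of commutators whose product is `g`
(defined as `sInf` of the set of such numbers; it is `0` junk value if `g` is not
in the commutator subgroup). -/
noncomputable def commLength {G : Type*} [Group G] (g : G) : ℕ :=
  sInf {k : ℕ | ∃ a b : Fin k → G, g = (List.ofFn fun i => ⁅a i, b i⁆).prod}

/-- The stable commutator length. -/
noncomputable def stableCommLength {G : Type*} [Group G] (g : G) : ℝ :=
  limsup (fun k : ℕ => (commLength (g ^ k) : ℝ) / k) atTop

/-! Writing `α ^ k` as a product of `cl(α ^ k)` commutators, the quasihomomorphism inequality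
costs at most `5D` per commutator (via `⁅a, b⁆ = (a b)(a⁻¹ b⁻¹)` and `ψ g⁻¹ ≈ -ψ g`) and `D` per
multiplication, so `ν (ψ (α ^ k)) ≤ 6 D cl(α ^ k)`. On the other hand `ψ (α ^ k)` differs from
`k • ψ α` by at most `k D`. Dividing by `k` and passing to the limsup gives the bound. -/

section CommLength

variable {G : Type*} [Group G]

lemma exists_ofFn_commutator_prod_iff (g : G) (k : ℕ) :
    (∃ a b : Fin k → G, g = (List.ofFn fun i => ⁅a i, b i⁆).prod) ↔
      ∃ l : List G, (∀ x ∈ l, x ∈ commutatorSet G) ∧ l.length = k ∧ l.prod = g := by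
  constructor
  · rintro ⟨a, b, rfl⟩
    refine ⟨List.ofFn fun i => ⁅a i, b i⁆, ?_, List.length_ofFn, rfl⟩
    simp only [List.forall_mem_ofFn_iff]
    exact fun i => commutator_mem_commutatorSet _ _
  · rintro ⟨l, hl, rfl, rfl⟩
    choose a b hab using fun i : Fin l.length => hl (l.get i) (List.get_mem l i)
    exact ⟨a, b, by simp only [hab, List.ofFn_get]⟩

lemma commutatorSet_inv_subset : (commutatorSet G)⁻¹ ⊆ commutatorSet G := by
  rintro x ⟨a, b, h⟩
  exact ⟨b, a, by rw [← commutatorElement_inv, h, inv_inv]⟩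

lemma exists_list_prod_eq_of_mem_commutator {g : G} (hg : g ∈ commutator G) :
    ∃ l : List G, (∀ x ∈ l, x ∈ commutatorSet G) ∧ l.prod = g := by
  rw [commutator_eq_closure] at hg
  have hg' : g ∈ Submonoid.closure (commutatorSet G ∪ (commutatorSet G)⁻¹) := by
    rwa [← Subgroup.closure_toSubmonoid]
  rw [Set.union_eq_left.mpr commutatorSet_inv_subset] at hg'
  exact Submonoid.exists_list_of_mem_closure hg'

lemma commLength_le_length {l : List G} (hl : ∀ x ∈ l, x ∈ commutatorSet G) :
    commLength l.prod ≤ l.length :=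
  Nat.sInf_le ((exists_ofFn_commutator_prod_iff _ _).mpr ⟨l, hl, rfl, rfl⟩)

lemma exists_list_length_eq_commLength {g : G} (hg : g ∈ commutator G) :
    ∃ l : List G, (∀ x ∈ l, x ∈ commutatorSet G) ∧ l.length = commLength g ∧ l.prod = g := by
  obtain ⟨l, hl, hprod⟩ := exists_list_prod_eq_of_mem_commutator hg
  exact (exists_ofFn_commutator_prod_iff g _).mp <|
    Nat.sInf_mem (s := {k | ∃ a b : Fin k → G, g = (List.ofFn fun i => ⁅a i, b i⁆).prod})
      ⟨l.length, (exists_ofFn_commutator_prod_iff g _).mpr ⟨l, hl, rfl, hprod⟩⟩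

lemma commLength_pow_le {g : G} (hg : g ∈ commutator G) (k : ℕ) :
    commLength (g ^ k) ≤ k * commLength g := by
  obtain ⟨l, hl, hlen, rfl⟩ := exists_list_length_eq_commLength hg
  have hmem : ∀ x ∈ (List.replicate k l).flatten, x ∈ commutatorSet G := by
    simp only [List.mem_flatten, List.mem_replicate]
    rintro x ⟨_, ⟨-, rfl⟩, hx⟩
    exact hl x hx
  have := commLength_le_length hmem
  rwa [List.prod_flatten, List.map_replicate, List.prod_replicate, List.length_flatten,
    List.map_replicate, List.sum_replicate, smul_eq_mul, hlen] at this

lemma isBoundedUnder_le_commLength_pow_div {g : G} (hg : g ∈ commutator G) :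
    IsBoundedUnder (· ≤ ·) atTop fun k : ℕ => (commLength (g ^ k) : ℝ) / k := by
  refine isBoundedUnder_of ⟨commLength g, fun k => div_le_of_le_mul₀ k.cast_nonneg
    (Nat.cast_nonneg _) ?_⟩
  rw [mul_comm]
  exact_mod_cast commLength_pow_le hg k

end CommLength

section Quasihom

variable {G : Type*} [Group G] {A : Type*} [AddCommGroup A] {ν : A → ℝ} {ψ : G → A} {D : ℝ}

lemma norm_map_mul_sub_le (hν_neg : ∀ a, ν (-a) = ν a)
    (hψ : ∀ g h : G, ν (ψ g - ψ (g * h) + ψ h) ≤ D) (g h : G) :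
    ν (ψ (g * h) - ψ g - ψ h) ≤ D := by
  rw [← hν_neg]
  convert hψ g h using 2
  abel

lemma norm_map_add_map_inv_le (hν_add : ∀ a b, ν (a + b) ≤ ν a + ν b)
    (hψ : ∀ g h : G, ν (ψ g - ψ (g * h) + ψ h) ≤ D) (hψ1 : ν (ψ 1) = 0) (g : G) :
    ν (ψ g + ψ g⁻¹) ≤ D := by
  have h := hψ g g⁻¹
  rw [mul_inv_cancel] at h
  calc ν (ψ g + ψ g⁻¹) = ν ((ψ g - ψ 1 + ψ g⁻¹) + ψ 1) := by congr 1; abel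
    _ ≤ ν (ψ g - ψ 1 + ψ g⁻¹) + ν (ψ 1) := hν_add _ _
    _ ≤ D := by linarith

lemma norm_map_commutator_le (hν_neg : ∀ a, ν (-a) = ν a)
    (hν_add : ∀ a b, ν (a + b) ≤ ν a + ν b)
    (hψ : ∀ g h : G, ν (ψ g - ψ (g * h) + ψ h) ≤ D) (hψ1 : ν (ψ 1) = 0) (a b : G) :
    ν (ψ ⁅a, b⁆) ≤ 5 * D := by
  have hdef := norm_map_mul_sub_le hν_neg hψ
  have hinv := norm_map_add_map_inv_le hν_add hψ hψ1
  set t₁ := ψ (a * b * (a⁻¹ * b⁻¹)) - ψ (a * b) - ψ (a⁻¹ * b⁻¹)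
  set t₂ := ψ (a * b) - ψ a - ψ b
  set t₃ := ψ (a⁻¹ * b⁻¹) - ψ a⁻¹ - ψ b⁻¹
  have hsplit : ψ ⁅a, b⁆ = t₁ + t₂ + t₃ + (ψ a + ψ a⁻¹) + (ψ b + ψ b⁻¹) := by
    rw [commutatorElement_def, show a * b * a⁻¹ * b⁻¹ = a * b * (a⁻¹ * b⁻¹) by group]
    simp only [t₁, t₂, t₃]
    abel
  rw [hsplit]
  linarith [hν_add (t₁ + t₂ + t₃ + (ψ a + ψ a⁻¹)) (ψ b + ψ b⁻¹),
    hν_add (t₁ + t₂ + t₃) (ψ a + ψ a⁻¹), hν_add (t₁ + t₂) t₃, hν_add t₁ t₂,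
    hdef (a * b) (a⁻¹ * b⁻¹), hdef a b, hdef a⁻¹ b⁻¹, hinv a, hinv b]

lemma norm_map_list_prod_le (hν_neg : ∀ a, ν (-a) = ν a)
    (hν_add : ∀ a b, ν (a + b) ≤ ν a + ν b)
    (hψ : ∀ g h : G, ν (ψ g - ψ (g * h) + ψ h) ≤ D) (hψ1 : ν (ψ 1) = 0)
    {C : ℝ} {l : List G} (hl : ∀ x ∈ l, ν (ψ x) ≤ C) :
    ν (ψ l.prod) ≤ l.length * (C + D) := by
  induction l with
  | nil => simp [hψ1]
  | cons x l ih =>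
    have hx := hl x List.mem_cons_self
    have hrest := ih fun y hy => hl y (List.mem_cons_of_mem x hy)
    have hsplit : ψ (x * l.prod) = (ψ (x * l.prod) - ψ x - ψ l.prod) + ψ x + ψ l.prod := by abel
    rw [List.prod_cons, hsplit, List.length_cons, Nat.cast_succ]
    linarith [hν_add (ψ (x * l.prod) - ψ x - ψ l.prod + ψ x) (ψ l.prod),
      hν_add (ψ (x * l.prod) - ψ x - ψ l.prod) (ψ x), norm_map_mul_sub_le hν_neg hψ x l.prod]

lemma norm_nsmul_sub_map_pow_le (hν_neg : ∀ a, ν (-a) = ν a)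
    (hν_add : ∀ a b, ν (a + b) ≤ ν a + ν b)
    (hψ : ∀ g h : G, ν (ψ g - ψ (g * h) + ψ h) ≤ D) (hψ1 : ν (ψ 1) = 0) (g : G) (n : ℕ) :
    ν (n • ψ g - ψ (g ^ n)) ≤ n * D := by
  induction n with
  | zero => simp [hν_neg, hψ1]
  | succ n ih =>
    have hsplit : (n + 1) • ψ g - ψ (g ^ (n + 1)) =
        (n • ψ g - ψ (g ^ n)) + (ψ (g ^ n) - ψ (g ^ n * g) + ψ g) := by
      rw [succ_nsmul, pow_succ]; abel
    rw [hsplit, Nat.cast_succ]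
    linarith [hν_add (n • ψ g - ψ (g ^ n)) (ψ (g ^ n) - ψ (g ^ n * g) + ψ g), hψ (g ^ n) g]

lemma norm_nsmul_map_le_commLength (hν_neg : ∀ a, ν (-a) = ν a)
    (hν_add : ∀ a b, ν (a + b) ≤ ν a + ν b)
    (hψ : ∀ g h : G, ν (ψ g - ψ (g * h) + ψ h) ≤ D) (hψ1 : ν (ψ 1) = 0)
    {α : G} (hα : α ∈ commutator G) (k : ℕ) :
    ν (k • ψ α) ≤ 6 * D * commLength (α ^ k) + D * k := by
  obtain ⟨l, hl, hlen, hprod⟩ := exists_list_length_eq_commLength ((commutator G).pow_mem hα k)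
  have hcomm : ∀ x ∈ l, ν (ψ x) ≤ 5 * D := by
    rintro x hx
    obtain ⟨a, b, rfl⟩ := hl x hx
    exact norm_map_commutator_le hν_neg hν_add hψ hψ1 a b
  have hpow := norm_map_list_prod_le hν_neg hν_add hψ hψ1 hcomm
  rw [hprod, hlen] at hpow
  have hsplit : k • ψ α = (k • ψ α - ψ (α ^ k)) + ψ (α ^ k) := by abel
  rw [hsplit]
  linarith [hν_add (k • ψ α - ψ (α ^ k)) (ψ (α ^ k)),
    norm_nsmul_sub_map_pow_le hν_neg hν_add hψ hψ1 α k]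

end Quasihom

lemma le_mul_limsup_add_of_tendsto {ι : Type*} {l : Filter ι} [l.NeBot] {a b : ι → ℝ}
    {L c d : ℝ} (hc : 0 ≤ c) (ha : Tendsto a l (nhds L)) (hab : ∀ᶠ i in l, a i ≤ c * b i + d)
    (hb : IsBoundedUnder (· ≤ ·) l b) (hb' : IsCoboundedUnder (· ≤ ·) l b) :
    L ≤ c * limsup b l + d := by
  have hmono : Monotone fun x : ℝ => c * x + d := fun _ _ h =>
    add_le_add_left (mul_le_mul_of_nonneg_left h hc) d
  calc L = limsup a l := ha.limsup_eq.symm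
    _ ≤ limsup ((fun x => c * x + d) ∘ b) l :=
        limsup_le_limsup hab ha.isCoboundedUnder_le (hmono.isBoundedUnder_le_comp hb)
    _ = c * limsup b l + d :=
        (hmono.map_limsup_of_continuousAt b (by fun_prop) hb hb').symm

theorem quasihom_stable_norm_le_scl_general
    {G : Type*} [Group G] {A : Type*} [AddCommGroup A]
    (ν : A → ℝ)
    (hν_neg : ∀ a, ν (-a) = ν a)
    (hν_add : ∀ a b, ν (a + b) ≤ ν a + ν b)
    (ψ : G → A) (D : ℝ) (hD : 0 ≤ D)
    (hψ : ∀ g h : G, ν (ψ g - ψ (g * h) + ψ h) ≤ D)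
    (hψ1 : ν (ψ 1) = 0)
    (α : G) (hα : α ∈ commutator G) :
    ∀ L : ℝ, Tendsto (fun k : ℕ => ν (k • ψ α) / k) atTop (nhds L) →
      L ≤ 6 * D * stableCommLength α + D := by
  intro L hL
  refine le_mul_limsup_add_of_tendsto (by positivity) hL ?_
    (isBoundedUnder_le_commLength_pow_div hα)
    (isCoboundedUnder_le_of_le atTop fun k => by positivity)
  filter_upwards [eventually_gt_atTop 0] with k hk
  have hk' : (0 : ℝ) < k := by exact_mod_cast hk
  rw [div_le_iff₀ hk', add_mul, mul_assoc, div_mul_cancel₀ _ hk'.ne']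
  exact norm_nsmul_map_le_commLength hν_neg hν_add hψ hψ1 hα k

theorem quasihom_stable_norm_le_scl
    {G : Type*} [Group G] {A : Type*} [AddCommGroup A]
    (ν : A → ℝ)
    (hν_nonneg : ∀ a, 0 ≤ ν a)
    (hν_neg : ∀ a, ν (-a) = ν a)
    (hν_add : ∀ a b, ν (a + b) ≤ ν a + ν b)
    (ψ : G → A) (D : ℝ) (hD : 0 ≤ D)
    (hψ : ∀ g h : G, ν (ψ g - ψ (g * h) + ψ h) ≤ D)
    (hψ1 : ν (ψ 1) = 0)
    (α : G) (hα : α ∈ commutator G) :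
    ∀ L : ℝ, Tendsto (fun k : ℕ => ν (k • ψ α) / k) atTop (nhds L) →
      L ≤ 6 * D * stableCommLength α + D :=
  quasihom_stable_norm_le_scl_general ν hν_neg hν_add ψ D hD hψ hψ1 α hα
end

section
/- Let B₃ be the braid group on 3 strands, presented with generators σ₁, σ₂ and the relation σ₁σ₂σ₁ = σ₂σ₁σ₂. Then for every natural number n, the element (σ₁σ₂⁻¹)ⁿ can be written as a product of at most 8 elements of B₃, each of which is a conjugate of σ₁ or of σ₁⁻¹. Consequently the cyclic subgroup generated by σ₁σ₂⁻¹ is bounded by 8 in the biinvariant word norm of B₃ associated to the normally generating set {σ₁, σ₁⁻¹}. -/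
/-!
Since `σ₁σ₂σ₁ = σ₂σ₁σ₂`, the half twist `Δ = σ₁σ₂σ₁` swaps `σ₁` and `σ₂` under conjugation, so it
conjugates `x = σ₁σ₂⁻¹` to `x⁻¹`. Hence `x^(2m) = x^m · Δ x^(-m) Δ⁻¹ = (x^m Δ x^(-m)) · Δ⁻¹` is a
conjugate of `Δ` times `Δ⁻¹`, each a product of three conjugates of `σ₁^(±1)` (as `σ₂` is conjugate
to `σ₁`). Odd powers cost the two further factors of `x = σ₁ · σ₂⁻¹`.
-/

/-- The single braid relator of the braid group on 3 strands. -/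
def braidRels3 : Set (FreeGroup (Fin 2)) :=
  {FreeGroup.of 0 * FreeGroup.of 1 * FreeGroup.of 0 *
    (FreeGroup.of 1)⁻¹ * (FreeGroup.of 0)⁻¹ * (FreeGroup.of 1)⁻¹}

/-- The braid group on 3 strands as a presented group. -/
abbrev BraidGroup3 : Type := PresentedGroup braidRels3

/-- `g` has biinvariant word norm at most `k` with respect to the normal generating set
`{a, a⁻¹}`. -/
def ConjLengthLE {G : Type*} [Group G] (a : G) (k : ℕ) (g : G) : Prop :=
  ∃ l : List G, l.length ≤ k ∧ (∀ x ∈ l, IsConj a x ∨ IsConj a⁻¹ x) ∧ l.prod = g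

section

variable {G : Type*} [Group G]

theorem IsConj.inv {a b : G} (h : IsConj a b) : IsConj a⁻¹ b⁻¹ := by
  obtain ⟨c, rfl⟩ := isConj_iff.1 h
  exact isConj_iff.2 ⟨c, by group⟩

theorem IsConj.conj_right {a b : G} (h : IsConj a b) (c : G) : IsConj a (c * b * c⁻¹) :=
  h.trans (isConj_iff.2 ⟨c, rfl⟩)

namespace ConjLengthLE

variable {a g h : G} {k l : ℕ}

theorem mono (hkl : k ≤ l) : ConjLengthLE a k g → ConjLengthLE a l g
  | ⟨w, hw, hconj, hprod⟩ => ⟨w, hw.trans hkl, hconj, hprod⟩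

theorem of_isConj (hg : IsConj a g) : ConjLengthLE a 1 g :=
  ⟨[g], le_rfl, by simpa using Or.inl hg, List.prod_singleton⟩

theorem of_isConj_inv (hg : IsConj a⁻¹ g) : ConjLengthLE a 1 g :=
  ⟨[g], le_rfl, by simpa using Or.inr hg, List.prod_singleton⟩

theorem mul : ConjLengthLE a k g → ConjLengthLE a l h → ConjLengthLE a (k + l) (g * h)
  | ⟨v, hv, hvc, hvg⟩, ⟨w, hw, hwc, hwh⟩ =>
    ⟨v ++ w, by rw [List.length_append]; omega,
      fun x hx => (List.mem_append.1 hx).elim (hvc x) (hwc x),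
      by rw [List.prod_append, hvg, hwh]⟩

theorem conj (c : G) : ConjLengthLE a k g → ConjLengthLE a k (c * g * c⁻¹)
  | ⟨w, hw, hwc, hwg⟩ =>
    ⟨w.map (MulAut.conj c), by rwa [List.length_map],
      by simpa using fun x hx => (hwc x hx).imp (·.conj_right c) (·.conj_right c),
      by rw [← map_list_prod, hwg, MulAut.conj_apply]⟩

theorem inv : ConjLengthLE a k g → ConjLengthLE a k g⁻¹
  | ⟨w, hw, hwc, hwg⟩ =>
    ⟨(w.map (·⁻¹)).reverse, by rwa [List.length_reverse, List.length_map],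
      by
        simp only [List.mem_reverse, List.mem_map]
        rintro _ ⟨x, hx, rfl⟩
        exact (hwc x hx).symm.imp (inv_inv a ▸ ·.inv) (·.inv),
      by rw [← List.prod_inv_reverse, hwg]⟩

theorem exists_ofFn (hg : ConjLengthLE a k g) :
    ∃ m ≤ k, ∃ s : Fin m → G,
      (∀ i, (∃ β, s i = β * a * β⁻¹) ∨ (∃ β, s i = β * a⁻¹ * β⁻¹)) ∧ g = (List.ofFn s).prod := by
  obtain ⟨w, hw, hwc, rfl⟩ := hg
  refine ⟨w.length, hw, w.get, fun i => ?_, by rw [List.ofFn_get]⟩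
  simpa only [isConj_iff, eq_comm] using hwc _ (List.get_mem w i)

theorem pow_of_conj_eq_inv {x Δ : G} (hΔx : Δ * x * Δ⁻¹ = x⁻¹) (hΔ : ConjLengthLE a k Δ)
    (hx : ConjLengthLE a l x) (n : ℕ) : ConjLengthLE a (2 * k + l) (x ^ n) := by
  have hpow (m : ℕ) : Δ * (x ^ m)⁻¹ * Δ⁻¹ = x ^ m := by
    calc Δ * (x ^ m)⁻¹ * Δ⁻¹ = (MulAut.conj Δ x ^ m)⁻¹ := by rw [← map_pow, ← map_inv]; rfl
      _ = x ^ m := by rw [MulAut.conj_apply, hΔx, inv_pow, inv_inv]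
  have heven (m : ℕ) : ConjLengthLE a (2 * k) (x ^ (2 * m)) := by
    have : x ^ (2 * m) = x ^ m * Δ * (x ^ m)⁻¹ * Δ⁻¹ := by
      rw [two_mul, pow_add]
      nth_rw 2 [← hpow m]
      group
    rw [this, two_mul k]
    exact (hΔ.conj _).mul hΔ.inv
  obtain ⟨m, rfl | rfl⟩ := Nat.even_or_odd' n
  · exact (heven m).mono (Nat.le_add_right _ _)
  · rw [pow_succ]
    exact (heven m).mul hx

end ConjLengthLE

section Braid

variable {a b : G}

theorem isConj_of_braid (hab : a * b * a = b * a * b) : IsConj a b :=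
  isConj_iff.2 ⟨a * b, by rw [hab]; group⟩

theorem conj_mul_inv_of_braid (hab : a * b * a = b * a * b) :
    a * b * a * (a * b⁻¹) * (a * b * a)⁻¹ = (a * b⁻¹)⁻¹ := by
  have hconj_a : a * b * a * a * (a * b * a)⁻¹ = b := by
    rw [mul_inv_eq_iff_eq_mul]
    calc a * b * a * a = b * a * b * a := by rw [hab]
      _ = b * (a * b * a) := by group
  have hconj_b : a * b * a * b * (a * b * a)⁻¹ = a := by
    rw [mul_inv_eq_iff_eq_mul]
    calc a * b * a * b = a * (b * a * b) := by group
      _ = a * (a * b * a) := by rw [hab]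
  calc a * b * a * (a * b⁻¹) * (a * b * a)⁻¹
      = (a * b * a * a * (a * b * a)⁻¹) * (a * b * a * b * (a * b * a)⁻¹)⁻¹ := by group
    _ = (a * b⁻¹)⁻¹ := by rw [hconj_a, hconj_b]; group

theorem ConjLengthLE.mul_inv_pow_of_braid (hab : a * b * a = b * a * b) (n : ℕ) :
    ConjLengthLE a 8 ((a * b⁻¹) ^ n) := by
  have hab' : IsConj a b := isConj_of_braid hab
  have hΔ : ConjLengthLE a 3 (a * b * a) :=
    ((of_isConj (.refl a)).mul (of_isConj hab')).mul (of_isConj (.refl a))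
  have hx : ConjLengthLE a 2 (a * b⁻¹) := (of_isConj (.refl a)).mul (of_isConj_inv hab'.inv)
  exact pow_of_conj_eq_inv (conj_mul_inv_of_braid hab) hΔ hx n

end Braid

end

theorem braidGroup3_braid_relation :
    (PresentedGroup.of 0 * PresentedGroup.of 1 * PresentedGroup.of 0 : BraidGroup3) =
      PresentedGroup.of 1 * PresentedGroup.of 0 * PresentedGroup.of 1 :=
  PresentedGroup.mk_eq_mk_of_mul_inv_mem (by simp [braidRels3, mul_assoc])

theorem braid3_bounded_cyclic_subgroup :
    ∀ σ₁ σ₂ : BraidGroup3,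
      σ₁ = PresentedGroup.of 0 → σ₂ = PresentedGroup.of 1 →
      ∀ n : ℕ, ∃ (k : ℕ), k ≤ 8 ∧ ∃ s : Fin k → BraidGroup3,
        (∀ i, (∃ β : BraidGroup3, s i = β * σ₁ * β⁻¹) ∨
              (∃ β : BraidGroup3, s i = β * σ₁⁻¹ * β⁻¹)) ∧
        (σ₁ * σ₂⁻¹) ^ n = (List.ofFn s).prod := by
  rintro σ₁ σ₂ rfl rfl n
  exact (ConjLengthLE.mul_inv_pow_of_braid braidGroup3_braid_relation n).exists_ofFn
end

section
/- For all natural numbers m ≥ 1 and n ≥ 2 there exists N ≥ n and an element Δ of the commutator subgroup [B_N, B_N] of the braid group B_N with the following property: letting ι: B_n → B_N be the homomorphism determined by σ_k ↦ σ_k for 1 ≤ k ≤ n−1 (which exists since the Artin relations of B_n are satisfied in B_N), for all integers 0 ≤ i < j ≤ m the sets Δⁱ·ι(B_n)·Δ⁻ⁱ and Δʲ·ι(B_n)·Δ⁻ʲ commute elementwise: for every x, y in the image of ι, (Δⁱ x Δ⁻ⁱ)(Δʲ y Δ⁻ʲ) = (Δʲ y Δ⁻ʲ)(Δⁱ x Δ⁻ⁱ).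 In particular the image of B_n is strongly m-displaceable in B_N by an element of the commutator subgroup. -/
/-- The braid relators on `N` strands: `σᵢσⱼ = σⱼσᵢ` for `|i - j| ≥ 2` and
`σᵢσᵢ₊₁σᵢ = σᵢ₊₁σᵢσᵢ₊₁`. -/
def braidRels (N : ℕ) : Set (FreeGroup (Fin (N - 1))) :=
  { r | (∃ i j : Fin (N - 1), (i : ℕ) + 1 < (j : ℕ) ∧
          r = FreeGroup.of i * FreeGroup.of j * (FreeGroup.of i)⁻¹ *
              (FreeGroup.of j)⁻¹) ∨
        (∃ i j : Fin (N - 1), (i : ℕ) + 1 = (j : ℕ) ∧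
          r = FreeGroup.of i * FreeGroup.of j * FreeGroup.of i *
              (FreeGroup.of j)⁻¹ * (FreeGroup.of i)⁻¹ * (FreeGroup.of j)⁻¹) }

/-- The braid group on `N` strands as a presented group. -/
abbrev BraidGroup (N : ℕ) : Type := PresentedGroup (braidRels N)

/-!
Write `δ(a, l) = σ_a σ_{a+1} ⋯ σ_{a+l-1}`. The braid relations give
`δ(a, l) σ_i δ(a, l)⁻¹ = σ_{i+1}` for `a ≤ i < a + l - 1`. Take `L = n (m + 1)`, `N = 2L + 2` and
`Δ = δ(1, L)ⁿ δ(L + 2, L)⁻ⁿ`. The two factors involve non-adjacent generators, so they commute, and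
the second one commutes with `σ_1, …, σ_{n-1}`; hence for `1 ≤ d ≤ m` conjugation by `Δᵈ` sends
`σ_k` to `σ_{k+nd}` for `k < n`. So `Δᵈ ι(B_n) Δ⁻ᵈ` lies in the subgroup generated by
`σ_{n+1}, σ_{n+2}, …`, which commutes with `ι(B_n)`; conjugating by `Δⁱ` handles `Δⁱ` and `Δʲ`.
Finally, `σ_k σ_{k+1} σ_k = σ_{k+1} σ_k σ_{k+1}` forces all `σ_k` to have the same image in the
abelianization, so both factors of `Δ` have image `σ_1^{nL}` there and `Δ ∈ [B_N, B_N]`.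
-/

theorem Subgroup.commute_of_mem_closure {G : Type*} [Group G] {S T : Set G}
    (hST : ∀ a ∈ S, ∀ b ∈ T, Commute a b) {x y : G}
    (hx : x ∈ Subgroup.closure S) (hy : y ∈ Subgroup.closure T) : Commute x y := by
  have hle : Subgroup.closure S ≤ Subgroup.centralizer (Subgroup.closure T) := by
    rw [Subgroup.centralizer_closure, Subgroup.closure_le]
    exact fun a ha => Subgroup.mem_centralizer_iff.mpr fun b hb => (hST a ha b hb).eq.symm
  exact (Subgroup.mem_centralizer_iff.mp (hle hx) y hy).symm

theorem PresentedGroup.apply_mem_closure {α G : Type*} [Group G] {rels : Set (FreeGroup α)}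
    (φ : PresentedGroup rels →* G) {S : Set G} (h : ∀ a, φ (PresentedGroup.of a) ∈ S)
    (x : PresentedGroup rels) : φ x ∈ Subgroup.closure S :=
  PresentedGroup.generated_by rels (Subgroup.comap φ (Subgroup.closure S))
    (fun a => Subgroup.subset_closure (h a)) x

theorem commute_conj_pow_conj_pow {G : Type*} [Group G] {S : Set G} {Δ : G} {m : ℕ}
    (h : ∀ d, 0 < d → d ≤ m → ∀ x ∈ S, ∀ y ∈ S, Commute x (Δ ^ d * y * (Δ ^ d)⁻¹))
    {i j : ℕ} (hij : i < j) (hjm : j ≤ m) {x y : G} (hx : x ∈ S) (hy : y ∈ S) :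
    Commute (Δ ^ i * x * (Δ ^ i)⁻¹) (Δ ^ j * y * (Δ ^ j)⁻¹) := by
  obtain ⟨d, rfl⟩ := Nat.exists_eq_add_of_lt hij
  have key := (h (d + 1) d.succ_pos (by omega) x hx y hy).map (MulAut.conj (Δ ^ i))
  simp only [MulAut.conj_apply] at key
  convert key using 1
  group

namespace BraidGroup

open PresentedGroup

theorem commute_of {N : ℕ} {i j : Fin (N - 1)} (h : (i : ℕ) + 1 < j) :
    Commute (of (rels := braidRels N) i) (of j) :=
  commutatorElement_eq_one_iff_commute.mp (one_of_mem (Or.inl ⟨i, j, h, rfl⟩))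

theorem of_mul_of_mul_of {N : ℕ} {i j : Fin (N - 1)} (h : (i : ℕ) + 1 = j) :
    of (rels := braidRels N) i * of j * of i = of j * of i * of j := by
  have hrel : of (rels := braidRels N) i * of j * of i * (of j)⁻¹ * (of i)⁻¹ * (of j)⁻¹ = 1 :=
    one_of_mem (Or.inr ⟨i, j, h, rfl⟩)
  calc of (rels := braidRels N) i * of j * of i
      = (of i * of j * of i * (of j)⁻¹ * (of i)⁻¹ * (of j)⁻¹) * (of j * of i * of j) := by group
    _ = of j * of i * of j := by rw [hrel, one_mul]

/-- The generator `σ_{k+1}` (indices start at `0`), with junk value `1` when `N - 1 ≤ k`. -/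
def gen (N k : ℕ) : BraidGroup N :=
  if h : k < N - 1 then of ⟨k, h⟩ else 1

theorem gen_of_lt {N k : ℕ} (h : k < N - 1) : gen N k = of ⟨k, h⟩ := dif_pos h

theorem commute_gen {N k l : ℕ} (h : k + 2 ≤ l) : Commute (gen N k) (gen N l) := by
  unfold gen
  split_ifs with hk hl
  · exact commute_of (by simp only; omega)
  all_goals simp

theorem gen_mul_gen_mul_gen {N k : ℕ} (h : k + 1 < N - 1) :
    gen N k * gen N (k + 1) * gen N k = gen N (k + 1) * gen N k * gen N (k + 1) := by
  rw [gen_of_lt (by omega), gen_of_lt h]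
  exact of_mul_of_mul_of rfl

/-- `σ_{a+1} σ_{a+2} ⋯ σ_{a+l}`, the braid `δ(a + 1, l)`. -/
def cycle (N a : ℕ) : ℕ → BraidGroup N
  | 0 => 1
  | l + 1 => gen N a * cycle N (a + 1) l

theorem commute_gen_cycle {N k a : ℕ} (h : k + 2 ≤ a) (l : ℕ) :
    Commute (gen N k) (cycle N a l) := by
  induction l generalizing a with
  | zero => exact Commute.one_right _
  | succ l ih => exact (commute_gen h).mul_right (ih (by omega))

theorem commute_cycle_cycle {N a b : ℕ} {l : ℕ} (h : a + l + 1 ≤ b) (l' : ℕ) :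
    Commute (cycle N a l) (cycle N b l') := by
  induction l generalizing a with
  | zero => exact Commute.one_left _
  | succ l ih => exact (commute_gen_cycle (by omega) l').mul_left (ih (by omega))

theorem semiconjBy_cycle_gen {N a l i : ℕ} (ha : a ≤ i) (hi : i + 1 < a + l)
    (hl : a + l ≤ N - 1) : SemiconjBy (cycle N a l) (gen N i) (gen N (i + 1)) := by
  induction l generalizing a with
  | zero => omega
  | succ l ih =>
    rcases ha.eq_or_lt with rfl | ha
    · obtain ⟨l, rfl⟩ : ∃ l', l = l' + 1 := ⟨l - 1, by omega⟩
      have hQ := commute_gen_cycle (N := N) (le_refl (a + 2)) l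
      simp only [cycle, SemiconjBy]
      rw [mul_assoc, mul_assoc, ← hQ.eq, ← mul_assoc, ← mul_assoc,
        gen_mul_gen_mul_gen (by omega), mul_assoc, mul_assoc]
    · exact SemiconjBy.mul_left (commute_gen (by omega)) (ih (by omega) (by omega) (by omega))

theorem semiconjBy_cycle_pow_gen {N a l i : ℕ} (t : ℕ) (ha : a ≤ i) (hi : i + t < a + l)
    (hl : a + l ≤ N - 1) : SemiconjBy (cycle N a l ^ t) (gen N i) (gen N (i + t)) := by
  induction t generalizing i with
  | zero => simp
  | succ t ih =>
    rw [pow_succ, ← add_assoc, add_right_comm]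
    exact (ih (by omega) (by omega)).mul_left (semiconjBy_cycle_gen ha (by omega) hl)

theorem abelianization_of_gen {N k : ℕ} (h : k < N - 1) :
    Abelianization.of (gen N k) = Abelianization.of (gen N 0) := by
  induction k with
  | zero => rfl
  | succ k ih =>
    have hbraid := congrArg Abelianization.of (gen_mul_gen_mul_gen (N := N) h)
    simp only [map_mul] at hbraid
    rw [← ih (by omega)]
    refine (mul_left_cancel (hbraid.trans ?_)).symm
    rw [mul_comm (Abelianization.of (gen N (k + 1)))]

theorem abelianization_of_cycle {N a l : ℕ} (h : a + l ≤ N - 1) :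
    Abelianization.of (cycle N a l) = Abelianization.of (gen N 0) ^ l := by
  induction l generalizing a with
  | zero => simp [cycle]
  | succ l ih =>
    rw [cycle, map_mul, abelianization_of_gen (by omega), ih (by omega), pow_succ']

def inclusion {n N : ℕ} (h : n ≤ N) : BraidGroup n →* BraidGroup N :=
  toGroup (f := fun k => of (Fin.castLE (Nat.sub_le_sub_right h 1) k)) <| by
    rintro r (⟨i, j, hij, rfl⟩ | ⟨i, j, hij, rfl⟩)
    · simp only [map_mul, map_inv, FreeGroup.lift_apply_of]
      exact commutatorElement_eq_one_iff_commute.mpr (commute_of (by simpa using hij))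
    · simp only [map_mul, map_inv, FreeGroup.lift_apply_of]
      rw [of_mul_of_mul_of (by simpa using hij)]
      group

theorem inclusion_of {n N : ℕ} (h : n ≤ N) (k : Fin (n - 1)) :
    inclusion h (of k) = of (Fin.castLE (Nat.sub_le_sub_right h 1) k) :=
  toGroup.of _

theorem inclusion_of_eq_gen {n N : ℕ} (h : n ≤ N) (k : Fin (n - 1)) :
    inclusion h (of k) = gen N k := by
  rw [inclusion_of, gen_of_lt (by omega)]
  rfl

def displacer (N n L : ℕ) : BraidGroup N :=
  cycle N 0 L ^ n * (cycle N (L + 1) L ^ n)⁻¹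

theorem displacer_mem_commutator {N n L : ℕ} (h : 2 * L + 1 ≤ N - 1) :
    displacer N n L ∈ commutator (BraidGroup N) := by
  rw [← Abelianization.ker_of, MonoidHom.mem_ker, displacer, map_mul, map_inv, map_pow, map_pow,
    abelianization_of_cycle (by omega), abelianization_of_cycle (by omega), mul_inv_cancel]

theorem semiconjBy_displacer_pow_gen {N n L k : ℕ} (d : ℕ) (hk : k + n * d < L)
    (h : 2 * L + 1 ≤ N - 1) :
    SemiconjBy (displacer N n L ^ d) (gen N k) (gen N (k + n * d)) := by
  have hc : Commute (cycle N 0 L ^ n) (cycle N (L + 1) L ^ n) :=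
    (commute_cycle_cycle (by omega) L).pow_pow n n
  rw [displacer, (hc.inv_right).mul_pow, inv_pow, ← pow_mul]
  exact (semiconjBy_cycle_pow_gen (n * d) (Nat.zero_le k) (by omega) (by omega)).mul_left
    (((commute_gen_cycle (by omega) L).pow_right n).pow_right d).inv_right.symm

theorem commute_inclusion_conj_displacer_pow {n N L d : ℕ} (hn : n ≤ N) (h : 2 * L + 1 ≤ N - 1)
    (hd : 0 < d) (hdL : n * (d + 1) ≤ L) (x y : BraidGroup n) :
    Commute (inclusion hn x) (displacer N n L ^ d * inclusion hn y * (displacer N n L ^ d)⁻¹) := by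
  have hnd : n ≤ n * d := Nat.le_mul_of_pos_right n hd
  rw [mul_add, mul_one] at hdL
  have hx : inclusion hn x ∈ Subgroup.closure (gen N '' Set.Iio (n - 1)) :=
    apply_mem_closure (inclusion hn) (S := gen N '' Set.Iio (n - 1))
      (fun k => ⟨k, k.isLt, (inclusion_of_eq_gen hn k).symm⟩) x
  have hy : displacer N n L ^ d * inclusion hn y * (displacer N n L ^ d)⁻¹ ∈
      Subgroup.closure (gen N '' Set.Ici n) := by
    refine apply_mem_closure ((MulAut.conj _).toMonoidHom.comp (inclusion hn))
      (S := gen N '' Set.Ici n) (fun k => ⟨k + n * d, Set.mem_Ici.mpr (by omega), ?_⟩) y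
    rw [MonoidHom.comp_apply, MulEquiv.coe_toMonoidHom, MulAut.conj_apply, inclusion_of_eq_gen,
      mul_inv_eq_of_eq_mul (semiconjBy_displacer_pow_gen d (by omega) h).eq]
  refine Subgroup.commute_of_mem_closure ?_ hx hy
  rintro _ ⟨k, hk, rfl⟩ _ ⟨l, hl, rfl⟩
  exact commute_gen (by rw [Set.mem_Iio] at hk; rw [Set.mem_Ici] at hl; omega)

end BraidGroup

open BraidGroup in
theorem braid_strongly_displaceable_by_commutator_element :
    ∀ m n : ℕ, 1 ≤ m → 2 ≤ n →
      ∃ N : ℕ, ∃ hN : n ≤ N, ∃ Δ : BraidGroup N,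
        Δ ∈ commutator (BraidGroup N) ∧
        ∃ ι : BraidGroup n →* BraidGroup N,
          (∀ k : Fin (n - 1),
            ι (PresentedGroup.of k) =
              PresentedGroup.of (Fin.castLE (Nat.sub_le_sub_right hN 1) k)) ∧
          ∀ i j : ℕ, i < j → j ≤ m → ∀ x y : BraidGroup n,
            Commute (Δ ^ i * ι x * (Δ ^ i)⁻¹) (Δ ^ j * ι y * (Δ ^ j)⁻¹) := by
  intro m n _ _
  set L := n * (m + 1)
  have hN : n ≤ 2 * L + 2 := by
    have : n ≤ L := Nat.le_mul_of_pos_right n m.succ_pos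
    omega
  refine ⟨2 * L + 2, hN, displacer _ n L, displacer_mem_commutator (by omega), inclusion hN,
    inclusion_of hN, fun i j hij hjm x y => ?_⟩
  refine commute_conj_pow_conj_pow (S := Set.range (inclusion hN)) ?_ hij hjm ⟨x, rfl⟩ ⟨y, rfl⟩
  rintro d hd hdm _ ⟨x, rfl⟩ _ ⟨y, rfl⟩
  exact commute_inclusion_conj_displacer_pow hN (by omega) hd (Nat.mul_le_mul_left n (by omega)) x y
end
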